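/- arXiv:2309.06982 — 7 statements merged into one kernel-verified Lean document; each statement's English description precedes it below -/
import Mathlib

section
/- For subtractive dithering: if U ~ Unif(−1/2, 1/2), M = round(x/δ − U), and X̂ = δ(M + U), then for every fixed x ∈ ℝ, the error X̂ − x is uniformly distributed on (−δ/2, δ/2). -/
open MeasureTheory Real

section aux

open Set

local instance fact_one_pos : Fact ((0:ℝ) < 1) := ⟨one_pos⟩

/-- The representative map `AddCircle 1 → ℝ` landing in `(-1/2, 1/2]`. -/
noncomputable def repHalf : AddCircle (1:ℝ) → ℝ :=
  fun z => ((AddCircle.equivIoc (1:ℝ) (-(1/2)) z : Ioc (-(1/2):ℝ) (-(1/2) + 1)) : ℝ)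

lemma measurable_repHalf : Measurable repHalf :=
  measurable_subtype_coe.comp (AddCircle.measurableEquivIoc (1:ℝ) (-(1/2))).measurable

/-- `repHalf` of a coe is the unique point of `(-1/2,1/2]` congruent mod 1. -/
lemma repHalf_eq {w c : ℝ} (hc : c ∈ Ioc (-(1/2):ℝ) (1/2)) (n : ℤ) (h : w = c + n) :
    repHalf ((w : ℝ) : AddCircle (1:ℝ)) = c := by
  have hc' : c ∈ Ioc (-(1/2):ℝ) (-(1/2) + 1) := by
    constructor <;> [exact hc.1; linarith [hc.2]]
  unfold repHalf
  rw [AddCircle.equivIoc, QuotientAddGroup.equivIocMod_coe]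
  exact (toIocMod_eq_iff one_pos).2 ⟨hc', n, by simp [h]⟩

lemma repHalf_coe {w : ℝ} (hw : w ∈ Ioc (-(1/2):ℝ) (1/2)) :
    repHalf ((w : ℝ) : AddCircle (1:ℝ)) = w :=
  repHalf_eq hw 0 (by simp)

lemma map_repHalf_volume :
    (volume : Measure (AddCircle (1:ℝ))).map repHalf
      = volume.restrict (Ioc (-(1/2):ℝ) (1/2)) := by
  have h12 : (-(1/2) : ℝ) + 1 = 1/2 := by norm_num
  have hmp := AddCircle.measurePreserving_mk (1:ℝ) (-(1/2))
  rw [h12] at hmp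
  rw [← hmp.map_eq, Measure.map_map measurable_repHalf AddCircle.measurable_mk']
  have : (repHalf ∘ (fun w : ℝ => ((w : ℝ) : AddCircle (1:ℝ))))
      =ᵐ[volume.restrict (Ioc (-(1/2):ℝ) (1/2))] id := by
    filter_upwards [ae_restrict_mem measurableSet_Ioc] with w hw
    exact repHalf_coe hw
  rw [Measure.map_congr this, Measure.map_id]

end aux

/-- Subtractive dithering: the error `X̂ - x` is uniform on `(-δ/2, δ/2)`. -/
theorem stmt2 (δ x : ℝ) (hδ : 0 < δ)
    {Ω : Type*} [MeasurableSpace Ω] (P : Measure Ω) [IsProbabilityMeasure P]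
    (U : Ω → ℝ) (hU : Measurable U)
    (hUlaw : P.map U = volume.restrict (Set.Ioo (-(1/2) : ℝ) (1/2)))
    (rnd : ℝ → ℤ) (hrnd : ∀ y : ℝ, |y - (rnd y : ℝ)| ≤ 1/2) :
    P.map (fun ω => δ * ((rnd (x/δ - U ω) : ℝ) + U ω) - x)
      = (ENNReal.ofReal δ)⁻¹ • volume.restrict (Set.Ioo (-(δ/2)) (δ/2)) := by
  haveI : Fact ((0:ℝ) < 1) := ⟨one_pos⟩
  set t : ℝ := x / δ with ht
  have hxt : δ * t = x := by rw [ht]; field_simp [hδ.ne']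
  set c : AddCircle (1:ℝ) := ((t : ℝ) : AddCircle (1:ℝ)) with hcdef
  -- the "good" measurable version of the map
  set g : ℝ → ℝ := fun u => δ * repHalf (((u : ℝ) : AddCircle (1:ℝ)) - c) with hg
  have hcoe : Measurable (fun w : ℝ => ((w : ℝ) : AddCircle (1:ℝ))) := AddCircle.measurable_mk'
  have hsub : Measurable (fun z : AddCircle (1:ℝ) => z - c) := measurable_sub_const _
  have hgmeas : Measurable g :=
    ((measurable_repHalf.comp hsub).comp hcoe).const_mul δ
  -- exceptional set
  set S : Set ℝ := (fun n : ℤ => t - (n : ℝ)/2) '' Set.univ with hS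
  have hScount : S.Countable := (Set.countable_univ (α := ℤ)).image _
  -- pointwise agreement off S
  have hptwise : ∀ u : ℝ, u ∉ S →
      δ * ((rnd (t - u) : ℝ) + u) - x = g u := by
    intro u hu
    set n : ℤ := rnd (t - u) with hn
    have habs : |(t - u) - (n : ℝ)| ≤ 1/2 := hrnd (t - u)
    have hne : |(t - u) - (n : ℝ)| ≠ 1/2 := by
      intro habs2
      rcases (abs_eq (by norm_num : (0:ℝ) ≤ 1/2)).mp habs2 with h | h
      · exact hu ⟨2*n + 1, Set.mem_univ _, by push_cast; linarith⟩
      · exact hu ⟨2*n - 1, Set.mem_univ _, by push_cast; linarith⟩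
    have hlt : |(t - u) - (n : ℝ)| < 1/2 := lt_of_le_of_ne habs hne
    rw [abs_lt] at hlt
    have hcmem : (n : ℝ) + u - t ∈ Set.Ioc (-(1/2):ℝ) (1/2) := by
      constructor <;> [linarith [hlt.2]; linarith [hlt.1]]
    have hrep : repHalf (((u : ℝ) : AddCircle (1:ℝ)) - c) = (n : ℝ) + u - t := by
      have hcast : ((u : ℝ) : AddCircle (1:ℝ)) - c = (((u - t : ℝ)) : AddCircle (1:ℝ)) := by
        rw [hcdef, ← QuotientAddGroup.mk_sub]
      rw [hcast]
      exact repHalf_eq hcmem (-n) (by push_cast; ring)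
    rw [hg]
    simp only [hrep]
    rw [← hxt]
    ring
  -- a.e. agreement under P
  have hSmeas : MeasurableSet S := hScount.measurableSet
  have hSnull : P (U ⁻¹' S) = 0 := by
    rw [← Measure.map_apply hU hSmeas, hUlaw, Measure.restrict_apply hSmeas]
    exact measure_mono_null Set.inter_subset_left (hScount.measure_zero _)
  have hUae : ∀ᵐ ω ∂P, U ω ∉ S := by
    rw [ae_iff]
    simpa only [not_not] using (show P {a | U a ∈ S} = 0 from hSnull)
  have hae : (fun ω => δ * ((rnd (x/δ - U ω) : ℝ) + U ω) - x) =ᵐ[P] fun ω => g (U ω) := by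
    filter_upwards [hUae] with ω hω
    rw [← ht]
    exact hptwise (U ω) hω
  rw [Measure.map_congr hae]
  have hcomp : (fun ω => g (U ω)) = g ∘ U := rfl
  rw [hcomp, ← Measure.map_map hgmeas hU, hUlaw]
  -- switch Ioo to Ioc (they differ by a null set)
  have hIooIoc : volume.restrict (Set.Ioo (-(1/2):ℝ) (1/2))
      = volume.restrict (Set.Ioc (-(1/2):ℝ) (1/2)) :=
    Measure.restrict_congr_set Ioo_ae_eq_Ioc
  rw [hIooIoc]
  set μ0 : Measure ℝ := volume.restrict (Set.Ioc (-(1/2):ℝ) (1/2)) with hμ0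
  -- push through the circle
  have h12 : (-(1/2) : ℝ) + 1 = 1/2 := by norm_num
  have hmp := AddCircle.measurePreserving_mk (1:ℝ) (-(1/2))
  rw [h12] at hmp
  have hinv : (volume : Measure (AddCircle (1:ℝ))).map (fun z => z - c) = volume := by
    simpa [sub_eq_add_neg] using
      map_add_right_eq_self (volume : Measure (AddCircle (1:ℝ))) (-c)
  have e1 : μ0.map (fun u : ℝ => ((u : ℝ) : AddCircle (1:ℝ)) - c)
      = (volume : Measure (AddCircle (1:ℝ))) := by
    have h := Measure.map_map hsub hcoe (μ := μ0)
    have hcompeq : (fun z : AddCircle (1:ℝ) => z - c) ∘ (fun w : ℝ => ((w : ℝ) : AddCircle (1:ℝ)))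
        = fun u : ℝ => ((u : ℝ) : AddCircle (1:ℝ)) - c := rfl
    rw [hcompeq] at h
    rw [← h, hmp.map_eq, hinv]
  have hinner : Measurable (fun u : ℝ => ((u : ℝ) : AddCircle (1:ℝ)) - c) := hsub.comp hcoe
  have e2 : μ0.map (fun u : ℝ => repHalf (((u : ℝ) : AddCircle (1:ℝ)) - c)) = μ0 := by
    have h := Measure.map_map measurable_repHalf hinner (μ := μ0)
    have hcompeq : repHalf ∘ (fun u : ℝ => ((u : ℝ) : AddCircle (1:ℝ)) - c)
        = fun u : ℝ => repHalf (((u : ℝ) : AddCircle (1:ℝ)) - c) := rfl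
    rw [hcompeq] at h
    rw [← h, e1, map_repHalf_volume]
  have e3 : μ0.map g = μ0.map (fun v : ℝ => δ * v) := by
    have hinner2 : Measurable (fun u : ℝ => repHalf (((u : ℝ) : AddCircle (1:ℝ)) - c)) :=
      measurable_repHalf.comp hinner
    have h := Measure.map_map (measurable_const_mul δ) hinner2 (μ := μ0)
    have hcompeq : (fun v : ℝ => δ * v) ∘ (fun u : ℝ => repHalf (((u : ℝ) : AddCircle (1:ℝ)) - c))
        = g := rfl
    rw [hcompeq] at h
    rw [← h, e2]
  rw [e3]
  -- final scaling
  have hpre : Set.Ioc (-(1/2):ℝ) (1/2) = (fun v : ℝ => δ * v) ⁻¹' Set.Ioc (-(δ/2)) (δ/2) := by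
    ext v
    simp only [Set.mem_preimage, Set.mem_Ioc]
    constructor
    · rintro ⟨h1, h2⟩
      constructor
      · nlinarith
      · nlinarith
    · rintro ⟨h1, h2⟩
      constructor
      · nlinarith
      · nlinarith
  rw [hμ0, hpre, ← Measure.restrict_map (measurable_const_mul δ) measurableSet_Ioc,
    Real.map_volume_mul_left (ne_of_gt hδ)]
  have habs : |δ⁻¹| = δ⁻¹ := abs_of_pos (inv_pos.mpr hδ)
  rw [habs, ENNReal.ofReal_inv_of_pos hδ, Measure.restrict_smul,
    ← Measure.restrict_congr_set Ioo_ae_eq_Ioc]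
end

section
/- For the piecewise linear density f(x) = (1/δ) ∑_{k∈ℤ} a_k tri(x/δ − k) with all a_k > 0, the function x ↦ ln f(x) is Lipschitz continuous with Lipschitz constant at most ε = max_{|i−j|=1} (1/δ)(a_j/a_i − 1). -/
open MeasureTheory Real

/-- Gluing monotonicity on consecutive intervals of length δ. -/
lemma stmt4_glue (δ : ℝ) (hδ : 0 < δ) (g : ℝ → ℝ)
    (h : ∀ k : ℤ, MonotoneOn g (Set.Icc ((k : ℝ) * δ) (((k : ℝ) + 1) * δ))) :
    Monotone g := by
  have mem : ∀ x : ℝ, x ∈ Set.Icc ((⌊x / δ⌋ : ℝ) * δ) (((⌊x / δ⌋ : ℝ) + 1) * δ) := by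
    intro x
    constructor
    · rw [← le_div_iff₀ hδ]; exact Int.floor_le _
    · rw [← div_le_iff₀ hδ]; exact (Int.lt_floor_add_one _).le
  have memL : ∀ k : ℤ, ((k : ℝ) * δ) ∈ Set.Icc ((k : ℝ) * δ) (((k : ℝ) + 1) * δ) := by
    intro k; constructor
    · exact le_rfl
    · nlinarith
  have memR : ∀ k : ℤ, (((k : ℝ) + 1) * δ) ∈ Set.Icc ((k : ℝ) * δ) (((k : ℝ) + 1) * δ) := by
    intro k; constructor
    · nlinarith
    · exact le_rfl
  have B : ∀ m n : ℤ, m ≤ n → g ((m : ℝ) * δ) ≤ g ((n : ℝ) * δ) := by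
    intro m
    refine Int.le_induction le_rfl ?_
    intro n hmn ih
    refine ih.trans ?_
    have := h n (memL n) (memR n) (by nlinarith)
    simpa [add_mul] using this
  intro x y hxy
  set k := ⌊x / δ⌋ with hk
  set l := ⌊y / δ⌋ with hl
  have hkl : k ≤ l := Int.floor_le_floor (by gcongr)
  rcases eq_or_lt_of_le hkl with heq | hlt
  · exact h k (mem x) (heq ▸ mem y) hxy
  · have h1 : g x ≤ g (((k : ℝ) + 1) * δ) := h k (mem x) (memR k) (mem x).2
    have h2 : g (((k : ℝ) + 1) * δ) ≤ g ((l : ℝ) * δ) := by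
      have := B (k + 1) l hlt
      simpa [add_mul] using this
    have h3 : g ((l : ℝ) * δ) ≤ g y := h l (memL l) (mem y) (mem y).1
    exact h1.trans (h2.trans h3)

theorem stmt4 (δ : ℝ) (hδ : 0 < δ) (a : ℤ → ℝ) (ha : ∀ k, 0 < a k)
    (hsum : ∑' k : ℤ, a k = 1) (ε : ℝ)
    (hε : ∀ i j : ℤ, |i - j| = 1 → (1/δ) * (a j / a i - 1) ≤ ε)
    (f : ℝ → ℝ)
    (hf : ∀ x : ℝ, f x = (1/δ) * ∑' k : ℤ, a k * max (1 - |x/δ - (k:ℝ)|) 0) :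
    ∀ x y : ℝ, |Real.log (f x) - Real.log (f y)| ≤ ε * |x - y| := by
  -- ε is nonnegative
  have hε0 : 0 ≤ ε := by
    have h1 := hε 0 1 (by norm_num)
    have h2 := hε 1 0 (by norm_num)
    rcases le_total (a 0) (a 1) with hc | hc
    · have h3 : (1:ℝ) ≤ a 1 / a 0 := (one_le_div (ha 0)).2 hc
      have h4 : 0 ≤ (1/δ) * (a 1 / a 0 - 1) :=
        mul_nonneg (by positivity) (by linarith)
      linarith
    · have h3 : (1:ℝ) ≤ a 0 / a 1 := (one_le_div (ha 1)).2 hc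
      have h4 : 0 ≤ (1/δ) * (a 0 / a 1 - 1) :=
        mul_nonneg (by positivity) (by linarith)
      linarith
  -- explicit formula on each cell
  have key : ∀ (k : ℤ) (x : ℝ), x ∈ Set.Icc ((k:ℝ)*δ) (((k:ℝ)+1)*δ) →
      f x = (a k * (1 - (x/δ - (k:ℝ))) + a (k+1) * (x/δ - (k:ℝ))) / δ := by
    intro k x hx
    have hxk : (k:ℝ) ≤ x/δ := (le_div_iff₀ hδ).2 hx.1
    have hxk1 : x/δ ≤ (k:ℝ)+1 := (div_le_iff₀ hδ).2 hx.2
    rw [hf]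
    have hts : ∑' j : ℤ, a j * max (1 - |x/δ - (j:ℝ)|) 0
        = ∑ j ∈ ({k, k+1} : Finset ℤ), a j * max (1 - |x/δ - (j:ℝ)|) 0 := by
      apply tsum_eq_sum
      intro j hj
      simp only [Finset.mem_insert, Finset.mem_singleton] at hj
      push_neg at hj
      have hj' : j ≤ k - 1 ∨ k + 2 ≤ j := by omega
      have habs : (1:ℝ) ≤ |x/δ - (j:ℝ)| := by
        rcases hj' with hj' | hj'
        · have : (j:ℝ) ≤ (k:ℝ) - 1 := by exact_mod_cast (by push_cast; linarith [ (by exact_mod_cast hj' : (j:ℝ) ≤ (k:ℝ) - 1) ] : (j:ℝ) ≤ (k:ℝ) - 1)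
          rw [abs_of_nonneg (by linarith)]
          linarith
        · have : (k:ℝ) + 2 ≤ (j:ℝ) := by exact_mod_cast hj'
          rw [abs_of_nonpos (by linarith)]
          linarith
      rw [max_eq_right (by linarith), mul_zero]
    rw [hts, Finset.sum_pair (by omega : k ≠ k + 1)]
    have h1 : |x/δ - (k:ℝ)| = x/δ - (k:ℝ) := abs_of_nonneg (by linarith)
    have h2 : |x/δ - ((k+1:ℤ):ℝ)| = (k:ℝ) + 1 - x/δ := by
      push_cast
      rw [abs_of_nonpos (by linarith)]
      ring
    rw [h1, h2]
    rw [max_eq_left (by linarith), max_eq_left (by push_cast; linarith)]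
    push_cast
    rw [eq_div_iff hδ.ne']
    field_simp
    ring
  -- membership of each point in its cell
  have mem : ∀ x : ℝ, x ∈ Set.Icc ((⌊x / δ⌋ : ℝ) * δ) (((⌊x / δ⌋ : ℝ) + 1) * δ) := by
    intro x
    constructor
    · rw [← le_div_iff₀ hδ]; exact Int.floor_le _
    · rw [← div_le_iff₀ hδ]; exact (Int.lt_floor_add_one _).le
  -- positivity of f on each cell
  have fpos : ∀ (k : ℤ) (x : ℝ), x ∈ Set.Icc ((k:ℝ)*δ) (((k:ℝ)+1)*δ) → 0 < f x := by
    intro k x hx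
    rw [key k x hx]
    have hu0 : (0:ℝ) ≤ x/δ - (k:ℝ) := by
      have := (le_div_iff₀ hδ).2 hx.1; linarith
    have hu1 : x/δ - (k:ℝ) ≤ 1 := by
      have := (div_le_iff₀ hδ).2 hx.2; linarith
    apply div_pos _ hδ
    rcases le_total (a k) (a (k+1)) with hc | hc
    · nlinarith [ha k, mul_nonneg hu0 (sub_nonneg.2 hc)]
    · nlinarith [ha (k+1), mul_nonneg (by linarith : (0:ℝ) ≤ 1 - (x/δ - (k:ℝ))) (sub_nonneg.2 hc)]
  have fpos' : ∀ x, 0 < f x := fun x => fpos ⌊x / δ⌋ x (mem x)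
  -- cleaned adjacent ratio bounds
  have hup : ∀ k : ℤ, a (k+1) - a k ≤ ε * δ * a k := by
    intro k
    have h := hε k (k+1) (by rw [show k - (k+1) = -1 by ring]; norm_num)
    rw [one_div, inv_mul_eq_div, div_le_iff₀ hδ] at h
    have h2 : a (k+1) / a k ≤ ε * δ + 1 := by linarith
    have h3 := (div_le_iff₀ (ha k)).1 h2
    nlinarith [ha k]
  have hdown : ∀ k : ℤ, a k - a (k+1) ≤ ε * δ * a (k+1) := by
    intro k
    have h := hε (k+1) k (by rw [show k + 1 - k = 1 by ring]; norm_num)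
    rw [one_div, inv_mul_eq_div, div_le_iff₀ hδ] at h
    have h2 : a k / a (k+1) ≤ ε * δ + 1 := by linarith
    have h3 := (div_le_iff₀ (ha (k+1))).1 h2
    nlinarith [ha (k+1)]
  -- derivative of f on the interior of each cell
  have hderiv : ∀ (k : ℤ) (x : ℝ), x ∈ Set.Ioo ((k:ℝ)*δ) (((k:ℝ)+1)*δ) →
      HasDerivAt f ((a (k+1) - a k)/δ^2) x := by
    intro k x hx
    have hF0 : ∀ y : ℝ, (a k * (1 - (y/δ - (k:ℝ))) + a (k+1) * (y/δ - (k:ℝ))) / δ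
        = a k / δ + ((a (k+1) - a k)/δ^2) * (y - (k:ℝ)*δ) := by
      intro y; field_simp; ring
    have hF : HasDerivAt (fun y : ℝ => a k / δ + ((a (k+1) - a k)/δ^2) * (y - (k:ℝ)*δ))
        ((a (k+1) - a k)/δ^2) x := by
      have h1 : HasDerivAt (fun y : ℝ => y - (k:ℝ)*δ) 1 x := (hasDerivAt_id x).sub_const _
      have h2 := (h1.const_mul ((a (k+1) - a k)/δ^2)).const_add (a k / δ)
      simpa using h2
    have heq : f =ᶠ[nhds x] (fun y : ℝ => a k / δ + ((a (k+1) - a k)/δ^2) * (y - (k:ℝ)*δ)) := by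
      filter_upwards [isOpen_Ioo.mem_nhds hx] with y hy
      rw [key k y (Set.Ioo_subset_Icc_self hy), hF0 y]
    exact hF.congr_of_eventuallyEq heq
  -- monotone: x ↦ ε x - log (f x)
  have mono1 : Monotone (fun x => ε * x - Real.log (f x)) := by
    apply stmt4_glue δ hδ
    intro k
    apply monotoneOn_of_hasDerivWithinAt_nonneg (convex_Icc _ _)
      (f' := fun x => ε - ((a (k+1) - a k)/δ^2) / f x)
    · -- continuity
      apply ContinuousOn.sub (Continuous.continuousOn (by fun_prop))
      apply ContinuousOn.log
      · apply ContinuousOn.congr (f := fun x => (a k * (1 - (x/δ - (k:ℝ))) + a (k+1) * (x/δ - (k:ℝ))) / δ)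
        · fun_prop
        · intro x hx; exact key k x hx
      · intro x hx; exact (fpos k x hx).ne'
    · rw [interior_Icc]
      intro x hx
      have hfd := hderiv k x hx
      have hlog := hfd.log (fpos k x (Set.Ioo_subset_Icc_self hx)).ne'
      have h2 := ((hasDerivAt_id x).const_mul ε).sub hlog
      simpa using (show HasDerivAt (fun x => ε * x - Real.log (f x)) (ε * 1 - ((a (k+1) - a k)/δ^2) / f x) x from h2).hasDerivWithinAt
    · rw [interior_Icc]
      intro x hx
      have hxI := Set.Ioo_subset_Icc_self hx
      rw [sub_nonneg, div_le_iff₀ (fpos k x hxI), key k x hxI]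
      set u := x/δ - (k:ℝ) with hu
      have hu0 : (0:ℝ) ≤ u := by
        have := (le_div_iff₀ hδ).2 hxI.1; simp only [hu]; linarith
      have hu1 : u ≤ 1 := by
        have := (div_le_iff₀ hδ).2 hxI.2; simp only [hu]; linarith
      have goal' : a (k+1) - a k ≤ ε * δ * (a k * (1 - u) + a (k+1) * u) := by
        rcases le_total (a (k+1)) (a k) with hc | hc
        · have hcomb : 0 < a k * (1 - u) + a (k+1) * u := by
            nlinarith [ha (k+1), mul_nonneg (by linarith : (0:ℝ) ≤ 1 - u) (sub_nonneg.2 hc)]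
          nlinarith [mul_nonneg (mul_nonneg hε0 hδ.le) hcomb.le]
        · nlinarith [hup k, mul_nonneg (mul_nonneg hε0 hδ.le)
            (mul_nonneg hu0 (sub_nonneg.2 hc))]
      calc (a (k+1) - a k)/δ^2 ≤ (ε * δ * (a k * (1 - u) + a (k+1) * u))/δ^2 := by
            gcongr
        _ = ε * ((a k * (1 - u) + a (k+1) * u) / δ) := by
            field_simp
  -- monotone: x ↦ ε x + log (f x)
  have mono2 : Monotone (fun x => ε * x + Real.log (f x)) := by
    apply stmt4_glue δ hδ
    intro k
    apply monotoneOn_of_hasDerivWithinAt_nonneg (convex_Icc _ _)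
      (f' := fun x => ε + ((a (k+1) - a k)/δ^2) / f x)
    · apply ContinuousOn.add (Continuous.continuousOn (by fun_prop))
      apply ContinuousOn.log
      · apply ContinuousOn.congr (f := fun x => (a k * (1 - (x/δ - (k:ℝ))) + a (k+1) * (x/δ - (k:ℝ))) / δ)
        · fun_prop
        · intro x hx; exact key k x hx
      · intro x hx; exact (fpos k x hx).ne'
    · rw [interior_Icc]
      intro x hx
      have hfd := hderiv k x hx
      have hlog := hfd.log (fpos k x (Set.Ioo_subset_Icc_self hx)).ne'
      have h2 := ((hasDerivAt_id x).const_mul ε).add hlog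
      simpa using (show HasDerivAt (fun x => ε * x + Real.log (f x)) (ε * 1 + ((a (k+1) - a k)/δ^2) / f x) x from h2).hasDerivWithinAt
    · rw [interior_Icc]
      intro x hx
      have hxI := Set.Ioo_subset_Icc_self hx
      have hkey : -((a (k+1) - a k)/δ^2) / f x ≤ ε := by
        rw [div_le_iff₀ (fpos k x hxI), key k x hxI]
        set u := x/δ - (k:ℝ) with hu
        have hu0 : (0:ℝ) ≤ u := by
          have := (le_div_iff₀ hδ).2 hxI.1; simp only [hu]; linarith
        have hu1 : u ≤ 1 := by
          have := (div_le_iff₀ hδ).2 hxI.2; simp only [hu]; linarith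
        have goal' : a k - a (k+1) ≤ ε * δ * (a k * (1 - u) + a (k+1) * u) := by
          rcases le_total (a k) (a (k+1)) with hc | hc
          · have hcomb : 0 < a k * (1 - u) + a (k+1) * u := by
              nlinarith [ha k, mul_nonneg hu0 (sub_nonneg.2 hc)]
            nlinarith [mul_nonneg (mul_nonneg hε0 hδ.le) hcomb.le]
          · nlinarith [hdown k, mul_nonneg (mul_nonneg hε0 hδ.le)
              (mul_nonneg (by linarith : (0:ℝ) ≤ 1 - u) (sub_nonneg.2 hc))]
        calc -((a (k+1) - a k)/δ^2) = (a k - a (k+1))/δ^2 := by ring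
          _ ≤ (ε * δ * (a k * (1 - u) + a (k+1) * u))/δ^2 := by gcongr
          _ = ε * ((a k * (1 - u) + a (k+1) * u) / δ) := by field_simp
      have := (div_le_iff₀ (fpos' x)).1 (le_refl (((a (k+1) - a k)/δ^2) / f x))
      rw [neg_div] at hkey
      linarith
  -- conclude
  have main : ∀ x y : ℝ, x ≤ y → |Real.log (f x) - Real.log (f y)| ≤ ε * (y - x) := by
    intro x y hxy
    have m1 := mono1 hxy
    have m2 := mono2 hxy
    simp only at m1 m2
    rw [abs_le]
    constructor <;> linarith
  intro x y
  rcases le_total x y with h | h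
  · rw [abs_of_nonpos (by linarith : x - y ≤ 0), neg_sub]
    exact main x y h
  · rw [abs_of_nonneg (by linarith : 0 ≤ x - y), abs_sub_comm]
    exact main y x h
end

section
/- The piecewise linear Laplace density g_δ(x) = (1/c_δ) ∑_{k∈ℤ} e^{−|kδ|} tri(x/δ − k), with c_δ = δ(1+e^{−δ})/(1−e^{−δ}), is a probability density function on ℝ. -/
open MeasureTheory Real

lemma tri_cont : Continuous (fun y : ℝ => max (1 - |y|) 0) :=
  (continuous_const.sub continuous_abs).max continuous_const

lemma tri_integrable : Integrable (fun y : ℝ => max (1 - |y|) 0) := by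
  apply tri_cont.integrable_of_hasCompactSupport
  apply HasCompactSupport.intro (isCompact_Icc (a := (-1:ℝ)) (b := 1))
  intro y hy
  simp only [Set.mem_Icc, not_and_or, not_le] at hy
  have : 1 - |y| ≤ 0 := by
    rcases hy with h | h
    · have : 1 < |y| := by rw [abs_of_neg (by linarith)]; linarith
      linarith
    · have : 1 < |y| := by rw [abs_of_pos (by linarith)]; linarith
      linarith
  exact max_eq_right this

lemma tri_integral : ∫ y : ℝ, max (1 - |y|) 0 = 1 := by
  have hsupp : Function.support (fun y : ℝ => max (1 - |y|) 0) ⊆ Set.Ioc (-1) 1 := by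
    intro y hy
    simp only [Function.mem_support] at hy
    by_contra h
    simp only [Set.mem_Ioc, not_and_or, not_lt, not_le] at h
    apply hy
    have : 1 ≤ |y| := by
      rcases h with h | h
      · rw [abs_of_nonpos (by linarith)]; linarith
      · rw [abs_of_pos (by linarith)]; linarith
    exact max_eq_right (by linarith)
  rw [← intervalIntegral.integral_eq_integral_of_support_subset hsupp]
  have : ∀ y ∈ Set.uIcc (-1:ℝ) 1, max (1 - |y|) 0 = 1 - |y| := by
    intro y hy
    rw [Set.uIcc_of_le (by norm_num)] at hy
    apply max_eq_left
    rcases hy with ⟨h1, h2⟩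
    rcases abs_cases y with ⟨h, _⟩ | ⟨h, _⟩ <;> linarith
  rw [intervalIntegral.integral_congr this]
  rw [intervalIntegral.integral_sub intervalIntegrable_const
    (continuous_abs.intervalIntegrable _ _)]
  have habs : ∫ y in (-1:ℝ)..1, |y| = 1 := by
    rw [← intervalIntegral.integral_add_adjacent_intervals (b := (0:ℝ))
      ((continuous_abs.intervalIntegrable _ _)) ((continuous_abs.intervalIntegrable _ _))]
    have h1 : ∫ y in (-1:ℝ)..0, |y| = ∫ y in (-1:ℝ)..0, -y := by
      apply intervalIntegral.integral_congr
      intro y hy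
      rw [Set.uIcc_of_le (by norm_num)] at hy
      exact abs_of_nonpos hy.2
    have h2 : ∫ y in (0:ℝ)..1, |y| = ∫ y in (0:ℝ)..1, y := by
      apply intervalIntegral.integral_congr
      intro y hy
      rw [Set.uIcc_of_le (by norm_num)] at hy
      exact abs_of_nonneg hy.1
    rw [h1, h2, intervalIntegral.integral_neg, integral_id, integral_id]
    norm_num
  rw [habs]
  simp

lemma tri_shift_integral (δ : ℝ) (hδ : 0 < δ) (k : ℝ) :
    ∫ x : ℝ, max (1 - |x/δ - k|) 0 = δ := by
  have h1 : (fun x : ℝ => max (1 - |x/δ - k|) 0)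
      = fun x : ℝ => (fun y : ℝ => max (1 - |y - k|) 0) (x / δ) := by
    funext x; rfl
  rw [h1, MeasureTheory.Measure.integral_comp_div (fun y : ℝ => max (1 - |y - k|) 0) δ]
  rw [integral_sub_right_eq_self (fun y : ℝ => max (1 - |y|) 0) k, tri_integral,
    abs_of_pos hδ]
  simp

lemma tri_shift_integrable (δ : ℝ) (hδ : 0 < δ) (k : ℝ) :
    Integrable (fun x : ℝ => max (1 - |x/δ - k|) 0) := by
  have := (tri_integrable.comp_sub_right k).comp_div hδ.ne'
  simpa using this

set_option maxHeartbeats 1000000 in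
lemma exp_abs_summable {r : ℝ} (hr0 : 0 ≤ r) (hr : r < 1) :
    HasSum (fun k : ℤ => r ^ (k.natAbs)) ((1 + r) / (1 - r)) := by
  have h1 : HasSum (fun n : ℕ => r ^ n) (1 - r)⁻¹ := hasSum_geometric_of_lt_one hr0 hr
  have h2 : HasSum (fun n : ℕ => r ^ (n + 1)) ((1 - r)⁻¹ * r) := by
    have := h1.mul_right r
    simpa only [← pow_succ] using this
  have h3 : HasSum (fun n : ℕ => ((fun k : ℤ => r ^ k.natAbs) (-((n : ℤ) + 1))))
      ((1 - r)⁻¹ * r) := by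
    have e : (fun n : ℕ => ((fun k : ℤ => r ^ k.natAbs) (-((n : ℤ) + 1))))
        = fun n : ℕ => r ^ (n + 1) := by
      funext n
      have : ((-((n : ℤ) + 1))).natAbs = n + 1 := by omega
      simp only [this]
    rw [e]
    exact h2
  have h4 : HasSum (fun n : ℕ => ((fun k : ℤ => r ^ k.natAbs) ((n : ℤ)))) (1 - r)⁻¹ := by
    have e : (fun n : ℕ => ((fun k : ℤ => r ^ k.natAbs) ((n : ℤ)))) = fun n : ℕ => r ^ n := by
      funext n
      have : ((n : ℤ)).natAbs = n := by omega
      simp only [this]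
    rw [e]
    exact h1
  have h5 := HasSum.of_nat_of_neg_add_one (f := fun k : ℤ => r ^ k.natAbs) h4 h3
  have h1r : 1 - r ≠ 0 := by linarith
  have heq : (1 + r) / (1 - r) = (1 - r)⁻¹ + (1 - r)⁻¹ * r := by
    field_simp
  rw [heq]
  exact h5

theorem stmt7 (δ : ℝ) (hδ : 0 < δ)
    (c : ℝ) (hc : c = δ * (1 + Real.exp (-δ)) / (1 - Real.exp (-δ)))
    (g : ℝ → ℝ)
    (hg : ∀ x : ℝ, g x = (1/c) * ∑' k : ℤ, Real.exp (-(|(k:ℝ)| * δ)) * max (1 - |x/δ - (k:ℝ)|) 0) :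
    (∀ x : ℝ, 0 ≤ g x) ∧ ∫ x : ℝ, g x = 1 := by
  set r := Real.exp (-δ) with hr
  have hr0 : 0 < r := Real.exp_pos _
  have hr1 : r < 1 := by
    rw [hr]
    exact Real.exp_lt_one_iff.mpr (by linarith)
  have hcpos : 0 < c := by
    rw [hc]
    apply div_pos
    · positivity
    · linarith
  -- rewrite the exponential
  have hexp : ∀ k : ℤ, Real.exp (-(|(k:ℝ)| * δ)) = r ^ k.natAbs := by
    intro k
    rw [hr, ← Real.exp_nat_mul]
    congr 1
    rw [Nat.cast_natAbs]
    push_cast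
    ring
  constructor
  · intro x
    rw [hg x]
    apply mul_nonneg (by positivity)
    apply tsum_nonneg
    intro k
    exact mul_nonneg (Real.exp_nonneg _) (le_max_right _ _)
  · have hsum : HasSum (fun k : ℤ => r ^ (k.natAbs)) ((1 + r) / (1 - r)) :=
      exp_abs_summable hr0.le hr1
    have hFint : ∀ k : ℤ, Integrable
        (fun x : ℝ => Real.exp (-(|(k:ℝ)| * δ)) * max (1 - |x/δ - (k:ℝ)|) 0) := by
      intro k
      exact (tri_shift_integrable δ hδ k).const_mul _
    have hFval : ∀ k : ℤ,
        ∫ x : ℝ, Real.exp (-(|(k:ℝ)| * δ)) * max (1 - |x/δ - (k:ℝ)|) 0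
          = r ^ k.natAbs * δ := by
      intro k
      rw [MeasureTheory.integral_const_mul, tri_shift_integral δ hδ k, hexp k]
    have hFnorm : ∀ k : ℤ,
        (∫ x : ℝ, ‖Real.exp (-(|(k:ℝ)| * δ)) * max (1 - |x/δ - (k:ℝ)|) 0‖)
          = r ^ k.natAbs * δ := by
      intro k
      rw [← hFval k]
      congr 1
      funext x
      rw [Real.norm_eq_abs, abs_of_nonneg
        (mul_nonneg (Real.exp_nonneg _) (le_max_right _ _))]
    have hswap : ∫ x : ℝ, ∑' k : ℤ, Real.exp (-(|(k:ℝ)| * δ)) * max (1 - |x/δ - (k:ℝ)|) 0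
        = ∑' k : ℤ, ∫ x : ℝ, Real.exp (-(|(k:ℝ)| * δ)) * max (1 - |x/δ - (k:ℝ)|) 0 := by
      refine (MeasureTheory.integral_tsum_of_summable_integral_norm hFint ?_).symm
      apply Summable.congr ((hsum.summable).mul_right δ)
      intro k
      exact (hFnorm k).symm
    have hint : ∫ x : ℝ, g x
        = (1/c) * ∑' k : ℤ, ∫ x : ℝ, Real.exp (-(|(k:ℝ)| * δ)) * max (1 - |x/δ - (k:ℝ)|) 0 := by
      calc ∫ x : ℝ, g x
          = ∫ x : ℝ, (1/c) * ∑' k : ℤ, Real.exp (-(|(k:ℝ)| * δ)) * max (1 - |x/δ - (k:ℝ)|) 0 := by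
            congr 1; funext x; exact hg x
        _ = (1/c) * ∫ x : ℝ, ∑' k : ℤ, Real.exp (-(|(k:ℝ)| * δ)) * max (1 - |x/δ - (k:ℝ)|) 0 :=
            MeasureTheory.integral_const_mul _ _
        _ = _ := by rw [hswap]
    rw [hint]
    have : ∑' k : ℤ, ∫ x : ℝ, Real.exp (-(|(k:ℝ)| * δ)) * max (1 - |x/δ - (k:ℝ)|) 0
        = (1 + r) / (1 - r) * δ := by
      rw [tsum_congr hFval, (hsum.mul_right δ).tsum_eq]
    rw [this, hc]
    have h1r : (1:ℝ) - r ≠ 0 := by linarith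
    have h1pr : (1:ℝ) + r ≠ 0 := by linarith
    have hδ' : δ ≠ 0 := hδ.ne'
    field_simp
end

section
/- The piecewise linear Laplace density converges pointwise to the standard Laplace density: for every x ∈ ℝ, g_δ(x) → (1/2)e^{−|x|} as δ → 0⁺. -/
open Real Filter

theorem stmt8 (x : ℝ) :
    Tendsto (fun δ : ℝ =>
        (1 / (δ * (1 + Real.exp (-δ)) / (1 - Real.exp (-δ)))) *
          ∑' k : ℤ, Real.exp (-(|(k:ℝ)| * δ)) * max (1 - |x/δ - (k:ℝ)|) 0)
      (nhdsWithin 0 (Set.Ioi 0)) (nhds ((1/2) * Real.exp (-|x|))) := by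
  -- Part 1: the normalization constant tends to 1/2
  have h1 : Tendsto (fun δ : ℝ => 1 / (δ * (1 + Real.exp (-δ)) / (1 - Real.exp (-δ))))
      (nhdsWithin 0 (Set.Ioi 0)) (nhds (1/2)) := by
    have heq : ∀ δ : ℝ, 1 / (δ * (1 + Real.exp (-δ)) / (1 - Real.exp (-δ)))
        = ((1 - Real.exp (-δ)) / δ) * (1 / (1 + Real.exp (-δ))) := by
      intro δ
      rw [one_div_div, div_eq_mul_inv, mul_inv]
      ring
    simp only [heq]
    have hd : HasDerivAt (fun δ : ℝ => 1 - Real.exp (-δ)) 1 0 := by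
      have hexp : HasDerivAt (fun δ : ℝ => Real.exp (-δ)) (-1) 0 := by
        have := (Real.hasDerivAt_exp (-0)).comp 0 (hasDerivAt_neg (0:ℝ))
        simpa [Function.comp_def] using this
      simpa [Pi.sub_def] using (hasDerivAt_const (0:ℝ) (1:ℝ)).sub hexp
    have hA : Tendsto (fun δ : ℝ => (1 - Real.exp (-δ)) / δ)
        (nhdsWithin 0 (Set.Ioi 0)) (nhds 1) := by
      rw [hasDerivAt_iff_tendsto_slope] at hd
      have hmono : nhdsWithin (0:ℝ) (Set.Ioi 0) ≤ nhdsWithin 0 {(0:ℝ)}ᶜ :=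
        nhdsWithin_mono 0 (fun y hy => ne_of_gt hy)
      refine (hd.mono_left hmono).congr (fun δ => ?_)
      simp [slope_def_field, Real.exp_zero]
    have hB : Tendsto (fun δ : ℝ => 1 / (1 + Real.exp (-δ)))
        (nhdsWithin 0 (Set.Ioi 0)) (nhds (1/2)) := by
      have hc : ContinuousAt (fun δ : ℝ => 1 / (1 + Real.exp (-δ))) 0 := by
        apply ContinuousAt.div continuousAt_const
        · fun_prop
        · norm_num [Real.exp_zero]
      have := hc.tendsto.mono_left (nhdsWithin_le_nhds (s := Set.Ioi 0))
      norm_num [Real.exp_zero] at this ⊢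
      exact this
    have := hA.mul hB
    rw [one_mul] at this
    exact this
  -- Part 2: bounds on the sum
  have key : ∀ δ : ℝ, 0 < δ →
      Real.exp (-(|x| + δ)) ≤ (∑' k : ℤ, Real.exp (-(|(k:ℝ)| * δ)) * max (1 - |x/δ - (k:ℝ)|) 0)
      ∧ (∑' k : ℤ, Real.exp (-(|(k:ℝ)| * δ)) * max (1 - |x/δ - (k:ℝ)|) 0)
        ≤ Real.exp (-(|x| - δ)) := by
    intro δ hδ
    set t : ℝ := x / δ with ht
    set n : ℤ := ⌊t⌋ with hnd
    set θ : ℝ := Int.fract t with hθd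
    have hn : (n:ℝ) ≤ t := Int.floor_le t
    have hn1 : t < n + 1 := Int.lt_floor_add_one t
    have hθ0 : 0 ≤ θ := Int.fract_nonneg t
    have hθ1 : θ < 1 := Int.fract_lt_one t
    have hθeq : θ = t - n := rfl
    set f : ℤ → ℝ := fun k => Real.exp (-(|(k:ℝ)| * δ)) * max (1 - |t - (k:ℝ)|) 0 with hf
    have hsupp : ∀ k : ℤ, k ∉ ({n, n+1} : Finset ℤ) → f k = 0 := by
      intro k hk
      simp only [Finset.mem_insert, Finset.mem_singleton] at hk
      push_neg at hk
      have hcase : k ≤ n - 1 ∨ n + 2 ≤ k := by omega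
      have h1le : (1:ℝ) ≤ |t - (k:ℝ)| := by
        rcases hcase with h | h
        · have : (k:ℝ) ≤ (n:ℝ) - 1 := by exact_mod_cast h
          have : (1:ℝ) ≤ t - k := by linarith
          exact le_trans this (le_abs_self _)
        · have : (n:ℝ) + 2 ≤ (k:ℝ) := by exact_mod_cast h
          have : (1:ℝ) ≤ -(t - k) := by linarith
          exact le_trans this (neg_le_abs _)
      have : max (1 - |t - (k:ℝ)|) 0 = 0 := max_eq_right (by linarith)
      simp [hf, this]
    have htsum : (∑' k : ℤ, f k) = f n + f (n+1) := by
      rw [tsum_eq_sum hsupp, Finset.sum_insert (by simp), Finset.sum_singleton]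
    have hfn : f n = Real.exp (-(|(n:ℝ)| * δ)) * (1 - θ) := by
      have : |t - (n:ℝ)| = θ := by rw [abs_of_nonneg (by linarith [hθeq] : (0:ℝ) ≤ t - n)]; linarith
      rw [hf]
      simp only [this]
      rw [max_eq_left (by linarith)]
    have hfn1 : f (n+1) = Real.exp (-(|((n:ℝ)+1)| * δ)) * θ := by
      have habs : |t - ((n:ℝ)+1)| = 1 - θ := by
        rw [abs_of_nonpos (by linarith : t - ((n:ℝ)+1) ≤ 0)]; linarith
      rw [hf]
      simp only [Int.cast_add, Int.cast_one, habs]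
      rw [show (1:ℝ) - (1 - θ) = θ by ring, max_eq_left hθ0]
    -- bounds on the two exponents
    have hnδ : (n:ℝ) * δ ≤ x := by
      have := (le_div_iff₀ hδ).mp hn
      linarith
    have hnδ1 : x < ((n:ℝ) + 1) * δ := by
      have := (div_lt_iff₀ hδ).mp hn1
      linarith
    have habs1 : |x| - δ ≤ |(n:ℝ)| * δ ∧ |(n:ℝ)| * δ ≤ |x| + δ := by
      have h1 : |(n:ℝ)| * δ = |(n:ℝ) * δ| := by rw [abs_mul, abs_of_pos hδ]
      have h2 : |(n:ℝ) * δ - x| ≤ δ := by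
        rw [abs_le]; constructor <;> nlinarith
      have h3 := abs_sub_abs_le_abs_sub ((n:ℝ) * δ) x
      have h4 := abs_sub_abs_le_abs_sub x ((n:ℝ) * δ)
      rw [abs_sub_comm] at h4
      rw [h1]
      exact ⟨by linarith, by linarith⟩
    have habs2 : |x| - δ ≤ |((n:ℝ)+1)| * δ ∧ |((n:ℝ)+1)| * δ ≤ |x| + δ := by
      have h1 : |((n:ℝ)+1)| * δ = |((n:ℝ)+1) * δ| := by rw [abs_mul, abs_of_pos hδ]
      have h2 : |((n:ℝ)+1) * δ - x| ≤ δ := by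
        rw [abs_le]; constructor <;> nlinarith
      have h3 := abs_sub_abs_le_abs_sub (((n:ℝ)+1) * δ) x
      have h4 := abs_sub_abs_le_abs_sub x (((n:ℝ)+1) * δ)
      rw [abs_sub_comm] at h4
      rw [h1]
      exact ⟨by linarith, by linarith⟩
    have hA1 : Real.exp (-(|x| + δ)) ≤ Real.exp (-(|(n:ℝ)| * δ)) :=
      Real.exp_le_exp.mpr (by linarith [habs1.2, habs1.1])
    have hA2 : Real.exp (-(|(n:ℝ)| * δ)) ≤ Real.exp (-(|x| - δ)) :=
      Real.exp_le_exp.mpr (by linarith [habs1.1])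
    have hB1 : Real.exp (-(|x| + δ)) ≤ Real.exp (-(|((n:ℝ)+1)| * δ)) :=
      Real.exp_le_exp.mpr (by linarith [habs2.2])
    have hB2 : Real.exp (-(|((n:ℝ)+1)| * δ)) ≤ Real.exp (-(|x| - δ)) :=
      Real.exp_le_exp.mpr (by linarith [habs2.1])
    have hsum_eq : (∑' k : ℤ, Real.exp (-(|(k:ℝ)| * δ)) * max (1 - |x/δ - (k:ℝ)|) 0)
        = Real.exp (-(|(n:ℝ)| * δ)) * (1 - θ) + Real.exp (-(|((n:ℝ)+1)| * δ)) * θ := by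
      rw [← ht, ← hf] at *
      rw [htsum, hfn, hfn1]
    rw [hsum_eq]
    constructor
    · nlinarith
    · nlinarith
  -- Part 3: squeeze
  have hS : Tendsto (fun δ : ℝ => ∑' k : ℤ, Real.exp (-(|(k:ℝ)| * δ)) * max (1 - |x/δ - (k:ℝ)|) 0)
      (nhdsWithin 0 (Set.Ioi 0)) (nhds (Real.exp (-|x|))) := by
    have hlow : Tendsto (fun δ : ℝ => Real.exp (-(|x| + δ)))
        (nhdsWithin 0 (Set.Ioi 0)) (nhds (Real.exp (-|x|))) := by
      have hc : ContinuousAt (fun δ : ℝ => Real.exp (-(|x| + δ))) 0 := by fun_prop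
      have := hc.tendsto.mono_left (nhdsWithin_le_nhds (s := Set.Ioi 0))
      simpa using this
    have hhigh : Tendsto (fun δ : ℝ => Real.exp (-(|x| - δ)))
        (nhdsWithin 0 (Set.Ioi 0)) (nhds (Real.exp (-|x|))) := by
      have hc : ContinuousAt (fun δ : ℝ => Real.exp (-(|x| - δ))) 0 := by fun_prop
      have := hc.tendsto.mono_left (nhdsWithin_le_nhds (s := Set.Ioi 0))
      simpa using this
    refine tendsto_of_tendsto_of_tendsto_of_le_of_le' hlow hhigh ?_ ?_
    · filter_upwards [self_mem_nhdsWithin] with δ hδ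
      exact (key δ hδ).1
    · filter_upwards [self_mem_nhdsWithin] with δ hδ
      exact (key δ hδ).2
  exact h1.mul hS
end

section
/- If ℓ > 1 and δ₀ > 0 satisfies e^{δ₀} = δ₀ℓ + 1, then δ₀ ≤ ln(2ℓ ln ℓ + 1). -/
open Real

theorem stmt11 (ℓ δ₀ : ℝ) (hℓ : 1 < ℓ) (hδ₀ : 0 < δ₀)
    (heq : Real.exp δ₀ = δ₀ * ℓ + 1) :
    δ₀ ≤ Real.log (2 * ℓ * Real.log ℓ + 1) := by
  have hℓ0 : (0:ℝ) < ℓ := lt_trans one_pos hℓ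
  have hlog : 0 < Real.log ℓ := Real.log_pos hℓ
  set A : ℝ := 2 * ℓ * Real.log ℓ + 1 with hA
  have hA1 : 1 < A := by
    have : 0 < 2 * ℓ * Real.log ℓ := by positivity
    linarith
  have hA0 : 0 < A := lt_trans one_pos hA1
  -- A ≤ ℓ^2 via log ℓ < sinh (log ℓ) = (ℓ - ℓ⁻¹)/2
  have hd : ∀ x : ℝ, HasDerivAt (fun x => Real.sinh x - x) (Real.cosh x - 1) x :=
    fun x => (Real.hasDerivAt_sinh x).sub (hasDerivAt_id x)
  have hmono : Monotone (fun x => Real.sinh x - x) :=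
    monotone_of_deriv_nonneg (fun x => (hd x).differentiableAt)
      (fun x => by rw [(hd x).deriv]; linarith [Real.one_le_cosh x])
  have hsinh : Real.log ℓ ≤ Real.sinh (Real.log ℓ) := by
    have := hmono (le_of_lt hlog)
    simp only [Real.sinh_zero, sub_zero] at this
    linarith
  have hsinh_log : Real.sinh (Real.log ℓ) = (ℓ - ℓ⁻¹) / 2 := Real.sinh_log hℓ0
  have hAle : A ≤ ℓ ^ 2 := by
    rw [hsinh_log] at hsinh
    have hinv : 0 < ℓ⁻¹ := inv_pos.mpr hℓ0
    have h2 : 2 * ℓ * Real.log ℓ ≤ ℓ * (ℓ - ℓ⁻¹) := by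
      have := mul_le_mul_of_nonneg_left hsinh (le_of_lt hℓ0)
      nlinarith
    have h3 : ℓ * (ℓ - ℓ⁻¹) = ℓ ^ 2 - 1 := by field_simp
    linarith
  set L : ℝ := Real.log A with hLdef
  have hL0 : 0 < L := Real.log_pos hA1
  have hexpL : Real.exp L = A := Real.exp_log hA0
  by_contra hcon
  push_neg at hcon
  -- hcon : L < δ₀
  have hb : 0 < L / δ₀ := div_pos hL0 hδ₀
  have ha : 0 < 1 - L / δ₀ := by
    have : L / δ₀ < 1 := (div_lt_one hδ₀).mpr hcon
    linarith
  have hconv := strictConvexOn_exp.2 (Set.mem_univ (0:ℝ)) (Set.mem_univ δ₀)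
    (ne_of_lt hδ₀) ha hb (by ring)
  have hcomb : (1 - L / δ₀) • (0:ℝ) + (L / δ₀) • δ₀ = L := by
    simp [smul_eq_mul]
    field_simp
  rw [hcomb] at hconv
  have hδne : δ₀ ≠ 0 := ne_of_gt hδ₀
  have hlt : Real.exp L < 1 + L * ℓ := by
    have : (1 - L / δ₀) • Real.exp 0 + (L / δ₀) • Real.exp δ₀
        = 1 + L * ℓ := by
      rw [Real.exp_zero, heq, smul_eq_mul, smul_eq_mul]
      field_simp
      ring
    linarith [hconv.trans_eq this]
  -- exp L = A = 2ℓ log ℓ + 1, so 2ℓ log ℓ < L ℓ, so 2 log ℓ < L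
  have h2log : 2 * Real.log ℓ < L := by
    rw [hexpL] at hlt
    have : 2 * ℓ * Real.log ℓ < L * ℓ := by linarith
    nlinarith
  -- but L = log A ≤ log ℓ² = 2 log ℓ
  have hLle : L ≤ 2 * Real.log ℓ := by
    have := Real.log_le_log hA0 hAle
    rwa [Real.log_pow, Nat.cast_ofNat] at this
  linarith
end

section
/- If f : ℝ → (0, ∞) is a probability density such that ln f is ε-Lipschitz, then the additive noise mechanism A(x) = x + Z, where Z has density f, satisfies ε·d-privacy for d(x,x') = |x−x'|. -/
/-!
Shifting the argument of the density by `x - x'` changes `log f` by at most `ε |x - x'|`, so the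
density of `x + Z` is pointwise at most `exp (ε |x - x'|)` times that of `x' + Z`; integrating over
`S` gives the privacy bound.
-/

open MeasureTheory Real

lemma withDensity_le_smul_withDensity {α : Type*} [MeasurableSpace α] (μ : Measure α)
    {f g : α → ENNReal} {c : ENNReal} (hc : c ≠ ⊤) (hfg : ∀ z, f z ≤ c * g z) :
    μ.withDensity f ≤ c • μ.withDensity g := by
  rw [← withDensity_smul' c g hc]
  exact withDensity_mono (Filter.Eventually.of_forall hfg)

lemma le_exp_mul_of_log_sub_le {a b c : ℝ} (ha : 0 < a) (hb : 0 < b) (h : log a - log b ≤ c) :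
    a ≤ exp c * b :=
  calc a = exp (log a) := (exp_log ha).symm
    _ ≤ exp (c + log b) := exp_le_exp.mpr (by linarith)
    _ = exp c * b := by rw [exp_add, exp_log hb]

lemma le_exp_mul_abs_sub_mul_of_abs_log_sub_le {ε : ℝ} {f : ℝ → ℝ} (hpos : ∀ z, 0 < f z)
    (hlip : ∀ z w : ℝ, |log (f z) - log (f w)| ≤ ε * |z - w|) (z w : ℝ) :
    f z ≤ exp (ε * |z - w|) * f w :=
  le_exp_mul_of_log_sub_le (hpos z) (hpos w) ((le_abs_self _).trans (hlip z w))

theorem stmt15_general (ε : ℝ) (f : ℝ → ℝ) (hpos : ∀ z, 0 < f z)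
    (hlip : ∀ z w : ℝ, |Real.log (f z) - Real.log (f w)| ≤ ε * |z - w|) :
    ∀ (x x' : ℝ) (S : Set ℝ), MeasurableSet S →
      volume.withDensity (fun z => ENNReal.ofReal (f (z - x))) S
        ≤ ENNReal.ofReal (Real.exp (ε * |x - x'|)) *
          volume.withDensity (fun z => ENNReal.ofReal (f (z - x'))) S := by
  intro x x' S _
  refine withDensity_le_smul_withDensity volume ENNReal.ofReal_ne_top (fun z => ?_) S
  rw [← ENNReal.ofReal_mul (exp_nonneg _)]
  refine ENNReal.ofReal_le_ofReal ?_
  have hshift : |(z - x) - (z - x')| = |x - x'| := by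
    rw [sub_sub_sub_cancel_left, abs_sub_comm]
  simpa only [hshift] using le_exp_mul_abs_sub_mul_of_abs_log_sub_le hpos hlip (z - x) (z - x')

theorem stmt15 (ε : ℝ) (hε : 0 < ε) (f : ℝ → ℝ) (hpos : ∀ z, 0 < f z)
    (hint : ∫ z : ℝ, f z = 1)
    (hlip : ∀ z w : ℝ, |Real.log (f z) - Real.log (f w)| ≤ ε * |z - w|) :
    ∀ (x x' : ℝ) (S : Set ℝ), MeasurableSet S →
      volume.withDensity (fun z => ENNReal.ofReal (f (z - x))) S
        ≤ ENNReal.ofReal (Real.exp (ε * |x - x'|)) *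
          volume.withDensity (fun z => ENNReal.ofReal (f (z - x'))) S :=
  stmt15_general ε f hpos hlip
end

section
/- If K is an integer random variable with P(K = k) = a_k where a_k = δ e^{−|k|δ}/c_δ, c_δ = δ(1+e^{−δ})/(1−e^{−δ}), and W ~ Unif(−1/2, 1/2) independent of K, and U ~ Unif(−1/2,1/2) independent of (K, W), then for fixed x ∈ ℝ, the random variable δ(round(x/δ + K + W − U) + U) − x has density g_δ, the piecewise linear Laplace density. -/
open MeasureTheory Real

section Helpers
open Set ENNReal


lemma round_measurable : Measurable (fun y : ℝ => (round y : ℤ)) := by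
  simp only [round_eq]
  exact Int.measurable_floor.comp (measurable_id.add_const _)

lemma sf_measurable : Measurable (fun y : ℝ => y - (round y : ℝ)) :=
  measurable_id.sub ((measurable_of_countable _).comp round_measurable)

lemma const_sub_measure (d : ℝ) (C : Set ℝ) (hC : MeasurableSet C) :
    volume ((fun u : ℝ => d - u) ⁻¹' C) = volume C := by
  have h := Measure.measurePreserving_sub_left (volume : Measure ℝ) d
  rw [← Measure.map_apply h.measurable hC, h.map_eq]

lemma sf_uniform (c0 : ℝ) (A : Set ℝ) (hA : MeasurableSet A) :
    volume ({u : ℝ | (c0 - u - (round (c0 - u) : ℝ)) ∈ A} ∩ Ioo (-(1/2)) (1/2))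
      = volume (A ∩ Ioo (-(1/2) : ℝ) (1/2)) := by
  obtain ⟨n, hn⟩ : ∃ n : ℤ, n = ⌊c0⌋ := ⟨_, rfl⟩
  obtain ⟨β, hb⟩ : ∃ β : ℝ, β = c0 - n - 1/2 := ⟨_, rfl⟩
  have hf1 : (n : ℝ) ≤ c0 := hn ▸ Int.floor_le c0
  have hf2 : c0 < (n : ℝ) + 1 := hn ▸ Int.lt_floor_add_one c0
  have hβ1 : -(1/2) ≤ β := by linarith
  have hβ2 : β < 1/2 := by linarith
  have hr1 : ∀ u : ℝ, -(1/2) < u → u ≤ β → round (c0 - u) = n + 1 := by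
    intro u h1 h2
    rw [round_eq, Int.floor_eq_iff]
    constructor
    · push_cast; linarith
    · push_cast; linarith
  have hr2 : ∀ u : ℝ, β < u → u < 1/2 → round (c0 - u) = n := by
    intro u h1 h2
    rw [round_eq, Int.floor_eq_iff]
    constructor
    · push_cast; linarith
    · push_cast; linarith
  have hsplit : {u : ℝ | (c0 - u - (round (c0 - u) : ℝ)) ∈ A} ∩ Ioo (-(1/2)) (1/2)
      = ((fun u => (β - 1/2) - u) ⁻¹' (A ∩ Ico (-(1/2)) β))
        ∪ ((fun u => (β + 1/2) - u) ⁻¹' (A ∩ Ioo β (1/2))) := by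
    ext u
    simp only [mem_inter_iff, mem_setOf_eq, mem_Ioo, mem_union, mem_preimage, mem_Ico]
    constructor
    · rintro ⟨huA, hu1, hu2⟩
      rcases le_or_gt u β with h | h
      · left
        rw [hr1 u hu1 h] at huA
        push_cast at huA
        have he : c0 - u - ((n : ℝ) + 1) = (β - 1/2) - u := by rw [hb]; ring
        rw [he] at huA
        exact ⟨huA, by linarith, by linarith⟩
      · right
        rw [hr2 u h hu2] at huA
        have he : c0 - u - (n : ℝ) = (β + 1/2) - u := by rw [hb]; ring
        rw [he] at huA
        exact ⟨huA, by linarith, by linarith⟩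
    · rintro (⟨huA, h1, h2⟩ | ⟨huA, h1, h2⟩)
      · have hu1 : -(1/2) < u := by linarith
        have hu2 : u ≤ β := by linarith
        refine ⟨?_, hu1, by linarith⟩
        rw [hr1 u hu1 hu2]
        push_cast
        have he : c0 - u - ((n : ℝ) + 1) = (β - 1/2) - u := by rw [hb]; ring
        rw [he]; exact huA
      · have hu1 : β < u := by linarith
        have hu2 : u < 1/2 := by linarith
        refine ⟨?_, by linarith, hu2⟩
        rw [hr2 u hu1 hu2]
        have he : c0 - u - (n : ℝ) = (β + 1/2) - u := by rw [hb]; ring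
        rw [he]; exact huA
  rw [hsplit]
  have hm1 : MeasurableSet (A ∩ Ico (-(1/2):ℝ) β) := hA.inter measurableSet_Ico
  have hm2 : MeasurableSet (A ∩ Ioo β (1/2:ℝ)) := hA.inter measurableSet_Ioo
  have hdisj : Disjoint ((fun u => (β - 1/2) - u) ⁻¹' (A ∩ Ico (-(1/2)) β))
      ((fun u => (β + 1/2) - u) ⁻¹' (A ∩ Ioo β (1/2))) := by
    rw [Set.disjoint_left]
    rintro u ⟨-, h1, -⟩ ⟨-, h3, h4⟩
    simp only [mem_Ico, mem_Ioo] at *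
    linarith
  have hmp2 : MeasurableSet ((fun u : ℝ => (β + 1/2) - u) ⁻¹' (A ∩ Ioo β (1/2))) :=
    (measurable_const.sub measurable_id) hm2
  rw [measure_union hdisj hmp2,
    const_sub_measure _ _ hm1, const_sub_measure _ _ hm2]
  have e1 : (A ∩ Ico (-(1/2):ℝ) β : Set ℝ) =ᵐ[volume] (A ∩ Ioc (-(1/2):ℝ) β : Set ℝ) := by
    refine Filter.EventuallyEq.inter (ae_eq_refl _) ?_
    exact (Ioo_ae_eq_Ico (μ := volume) (a := -(1/2:ℝ)) (b := β)).symm.trans Ioo_ae_eq_Ioc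
  rw [measure_congr e1, ← measure_union ?_ hm2, ← inter_union_distrib_left,
    Ioc_union_Ioo_eq_Ioo hβ1 hβ2]
  · rw [Set.disjoint_left]
    rintro u ⟨-, -, h2⟩ ⟨-, h3, -⟩
    exact absurd h3 (not_lt.mpr h2)


lemma ofReal_max0 (r : ℝ) : ENNReal.ofReal (max r 0) = ENNReal.ofReal r := by
  rcases le_total r 0 with h | h
  · rw [max_eq_right h, ENNReal.ofReal_zero, eq_comm, ENNReal.ofReal_eq_zero]; exact h
  · rw [max_eq_left h]

lemma tri_measure (α : ℝ) :
    volume (Ioo (α - 1/2) (α + 1/2) ∩ Ioo (-(1/2):ℝ) (1/2))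
      = ENNReal.ofReal (max (1 - |α|) 0) := by
  rw [Ioo_inter_Ioo, Real.volume_Ioo, ofReal_max0]
  congr 1
  rcases le_total 0 α with h | h
  · rw [abs_of_nonneg h, max_eq_left (by linarith), min_eq_right (by linarith)]
    ring
  · rw [abs_of_nonpos h, max_eq_right (by linarith), min_eq_left (by linarith)]
    ring

lemma affine_slice (δm : ℝ) (hδ : 0 < δm) (m : ℝ) (s : Set ℝ) (hs : MeasurableSet s) :
    volume ({e : ℝ | m - δm * e ∈ s} ∩ Ioo (-(1/2)) (1/2))
      = ENNReal.ofReal δm⁻¹ * volume (s ∩ Ioo (m - δm/2) (m + δm/2)) := by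
  have hI : Ioo (-(1/2):ℝ) (1/2) = (fun e : ℝ => m - δm * e) ⁻¹' Ioo (m - δm/2) (m + δm/2) := by
    ext e
    simp only [mem_Ioo, mem_preimage]
    constructor
    · rintro ⟨h1, h2⟩
      constructor <;> nlinarith
    · rintro ⟨h1, h2⟩
      constructor <;> nlinarith
  have hset : {e : ℝ | m - δm * e ∈ s} ∩ Ioo (-(1/2)) (1/2)
      = (fun e : ℝ => -δm * e) ⁻¹' ((fun z : ℝ => m + z) ⁻¹' (s ∩ Ioo (m - δm/2) (m + δm/2))) := by
    rw [hI]
    ext e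
    simp only [mem_inter_iff, mem_setOf_eq, mem_preimage]
    constructor
    · rintro ⟨h1, h2⟩; exact ⟨by rwa [show m + -δm * e = m - δm * e by ring], by rwa [show m + -δm * e = m - δm * e by ring]⟩
    · rintro ⟨h1, h2⟩; rw [show m + -δm * e = m - δm * e by ring] at h1 h2; exact ⟨h1, h2⟩
  rw [hset]
  have hC : MeasurableSet ((fun z : ℝ => m + z) ⁻¹' (s ∩ Ioo (m - δm/2) (m + δm/2))) :=
    (measurable_const_add m) (hs.inter measurableSet_Ioo)
  rw [Real.volume_preimage_mul_left (by linarith : -δm ≠ 0)]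
  rw [measure_preimage_add]
  congr 1
  rw [inv_neg, abs_neg, abs_of_nonneg (by positivity)]


lemma P_apply (a : ℤ → ℝ) (A : Set (ℝ × ℤ × ℝ)) (hA : MeasurableSet A) :
    ((volume.restrict (Ioo (-(1/2):ℝ) (1/2))).prod
      ((Measure.sum fun k : ℤ => ENNReal.ofReal (a k) • Measure.dirac k).prod
        (volume.restrict (Ioo (-(1/2):ℝ) (1/2))))) A
    = ∫⁻ u in Ioo (-(1/2):ℝ) (1/2), ∑' k : ℤ, ENNReal.ofReal (a k) *
        (volume.restrict (Ioo (-(1/2):ℝ) (1/2))) {w : ℝ | (u, k, w) ∈ A} := by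
  rw [Measure.prod_apply hA]
  refine lintegral_congr fun u => ?_
  rw [Measure.prod_apply (measurable_prodMk_left hA)]
  rw [lintegral_sum_measure]
  refine tsum_congr fun k => ?_
  rw [lintegral_smul_measure, lintegral_dirac]
  rfl


lemma rnd_eq_round (rnd : ℝ → ℤ) (hrnd : ∀ y : ℝ, |y - (rnd y : ℝ)| ≤ 1/2)
    (y : ℝ) (hy : y + 1/2 ∉ Set.range ((↑) : ℤ → ℝ)) : rnd y = round y := by
  have h := abs_le.mp (hrnd y)
  have h1 : (rnd y : ℝ) ≠ y + 1/2 := fun he => hy ⟨rnd y, he⟩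
  have h2 : (rnd y : ℝ) ≠ y - 1/2 := by
    intro he
    exact hy ⟨rnd y + 1, by push_cast; linarith⟩
  have hlt : (rnd y : ℝ) < y + 1/2 := lt_of_le_of_ne (by linarith [h.1]) h1
  have hgt : y - 1/2 < (rnd y : ℝ) := lt_of_le_of_ne (by linarith [h.2]) (Ne.symm h2)
  rw [round_eq]
  refine le_antisymm (Int.le_floor.mpr hlt.le) (Int.floor_le_iff.mpr ?_)
  push_cast
  linarith


lemma slice_eq (δ y : ℝ) (hδ : 0 < δ) (k : ℝ) :
    {w : ℝ | δ*(k+w) - δ/2 < y ∧ y < δ*(k+w) + δ/2}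
      = Ioo (y/δ - k - 1/2) (y/δ - k + 1/2) := by
  ext w
  simp only [mem_setOf_eq, mem_Ioo]
  constructor
  · rintro ⟨h1, h2⟩
    constructor
    · have h3 : y/δ < w + k + 1/2 := by rw [div_lt_iff₀ hδ]; nlinarith
      linarith
    · have h3 : w + k - 1/2 < y/δ := by rw [lt_div_iff₀ hδ]; nlinarith
      linarith
  · rintro ⟨h1, h2⟩
    have h3 : y/δ < w + k + 1/2 := by linarith
    have h4 : w + k - 1/2 < y/δ := by linarith
    rw [div_lt_iff₀ hδ] at h3
    rw [lt_div_iff₀ hδ] at h4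
    constructor <;> nlinarith

lemma inner_integral (δ x t : ℝ) (hδ : 0 < δ) (ht : t = x/δ) (k : ℤ) (s : Set ℝ)
    (hs : MeasurableSet s) :
    (∫⁻ u in Ioo (-(1/2):ℝ) (1/2),
      (volume.restrict (Ioo (-(1/2):ℝ) (1/2)))
        {w : ℝ | δ * ((round (t + (k:ℝ) + w - u) : ℝ) + u) - x ∈ s})
    = ENNReal.ofReal δ⁻¹ * ∫⁻ y in s, ENNReal.ofReal (max (1 - |y/δ - (k:ℝ)|) 0) := by
  have hδ' : (δ:ℝ) ≠ 0 := ne_of_gt hδ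
  have hδt : δ * t = x := by rw [ht]; field_simp
  set I : Set ℝ := Ioo (-(1/2)) (1/2) with hI
  -- B : joint set in (u,w)
  set B : Set (ℝ × ℝ) := {p | δ * ((round (t + (k:ℝ) + p.2 - p.1) : ℝ) + p.1) - x ∈ s} with hBdef
  have hmB : Measurable fun p : ℝ × ℝ => δ * ((round (t + (k:ℝ) + p.2 - p.1) : ℝ) + p.1) - x := by
    have h1 : Measurable fun p : ℝ × ℝ => t + (k:ℝ) + p.2 - p.1 :=
      (measurable_const.add measurable_snd).sub measurable_fst
    have h2 : Measurable fun p : ℝ × ℝ => ((round (t + (k:ℝ) + p.2 - p.1) : ℤ) : ℝ) :=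
      (measurable_of_countable _).comp (round_measurable.comp h1)
    exact ((measurable_const.mul (h2.add measurable_fst)).sub measurable_const)
  have hB : MeasurableSet B := hmB hs
  have h0 : ∀ u : ℝ, {w : ℝ | δ * ((round (t + (k:ℝ) + w - u) : ℝ) + u) - x ∈ s}
      = Prod.mk u ⁻¹' B := fun u => rfl
  simp only [h0]
  rw [← Measure.prod_apply hB, Measure.prod_apply_symm hB]
  have hstep : ∀ w : ℝ, (volume.restrict I) ((fun u => (u, w)) ⁻¹' B)
      = ENNReal.ofReal δ⁻¹ * volume (s ∩ Ioo (δ*((k:ℝ)+w) - δ/2) (δ*((k:ℝ)+w) + δ/2)) := by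
    intro w
    have hslice : MeasurableSet ((fun u : ℝ => (u, w)) ⁻¹' B) :=
      (measurable_id.prodMk measurable_const) hB
    rw [Measure.restrict_apply hslice]
    have hA2 : MeasurableSet {e : ℝ | δ*((k:ℝ)+w) - δ*e ∈ s} :=
      ((measurable_const.sub (measurable_const.mul measurable_id)) : Measurable fun e : ℝ => δ*((k:ℝ)+w) - δ*e) hs
    have hset : ((fun u : ℝ => (u, w)) ⁻¹' B)
        = {u : ℝ | ((t + (k:ℝ) + w) - u - (round ((t + (k:ℝ) + w) - u) : ℝ))
            ∈ {e : ℝ | δ*((k:ℝ)+w) - δ*e ∈ s}} := by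
      ext u
      have harith : δ * ((round (t + (k:ℝ) + w - u) : ℝ) + u) - x
          = δ*((k:ℝ)+w) - δ * ((t + (k:ℝ) + w - u) - (round (t + (k:ℝ) + w - u) : ℝ)) := by
        rw [← hδt]; ring
      simp only [mem_preimage, hBdef, mem_setOf_eq, harith]
    rw [hset, sf_uniform (t + (k:ℝ) + w) _ hA2, affine_slice δ hδ (δ*((k:ℝ)+w)) s hs]
  simp only [hstep]
  rw [lintegral_const_mul' _ _ ENNReal.ofReal_ne_top]
  congr 1
  -- swap integrals
  set C : Set (ℝ × ℝ) := {p | δ*((k:ℝ)+p.1) - δ/2 < p.2 ∧ p.2 < δ*((k:ℝ)+p.1) + δ/2} with hCdef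
  have hC : MeasurableSet C := by
    apply MeasurableSet.inter
    · exact measurableSet_lt ((measurable_const.mul (measurable_const.add measurable_fst)).sub measurable_const) measurable_snd
    · exact measurableSet_lt measurable_snd ((measurable_const.mul (measurable_const.add measurable_fst)).add measurable_const)
  have hleft : ∀ w : ℝ, volume (s ∩ Ioo (δ*((k:ℝ)+w) - δ/2) (δ*((k:ℝ)+w) + δ/2))
      = ∫⁻ y in s, C.indicator 1 (w, y) := by
    intro w
    rw [inter_comm, ← Measure.restrict_apply measurableSet_Ioo,
      ← lintegral_indicator_one measurableSet_Ioo]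
    refine lintegral_congr fun y => ?_
    simp only [Set.indicator_apply, mem_Ioo, hCdef, mem_setOf_eq, Pi.one_apply]
  simp only [hleft]
  have hswap : AEMeasurable (Function.uncurry fun w y => C.indicator (1 : ℝ × ℝ → ℝ≥0∞) (w, y))
      ((volume.restrict I).prod (volume.restrict s)) := by
    exact (measurable_one.indicator hC).aemeasurable
  rw [lintegral_lintegral_swap hswap]
  refine lintegral_congr fun y => ?_
  have hright : ∀ w : ℝ, C.indicator 1 (w, y) = ({w : ℝ | (w, y) ∈ C}).indicator (1 : ℝ → ℝ≥0∞) w := by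
    intro w
    simp only [Set.indicator_apply, mem_setOf_eq, Pi.one_apply]
  simp only [hright]
  have hDy : MeasurableSet {w : ℝ | (w, y) ∈ C} := (measurable_id.prodMk measurable_const) hC
  rw [lintegral_indicator_one hDy, Measure.restrict_apply hDy]
  have : {w : ℝ | (w, y) ∈ C} = Ioo (y/δ - (k:ℝ) - 1/2) (y/δ - (k:ℝ) + 1/2) := by
    rw [← slice_eq δ y hδ (k:ℝ)]
    rfl
  rw [this]
  exact tri_measure (y/δ - (k:ℝ))


lemma tri_zero {z : ℝ} {k : ℤ} (h : k ∉ ({⌊z⌋ - 1, ⌊z⌋, ⌊z⌋ + 1} : Finset ℤ)) :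
    max (1 - |z - (k : ℝ)|) 0 = 0 := by
  simp only [Finset.mem_insert, Finset.mem_singleton] at h
  push_neg at h
  have hk : k ≤ ⌊z⌋ - 2 ∨ ⌊z⌋ + 2 ≤ k := by omega
  have hf1 : (⌊z⌋ : ℝ) ≤ z := Int.floor_le z
  have hf2 : z < (⌊z⌋ : ℝ) + 1 := Int.lt_floor_add_one z
  have habs : 1 ≤ |z - (k : ℝ)| := by
    rcases hk with hk | hk
    · have h' : (k : ℝ) ≤ ((⌊z⌋ - 2 : ℤ) : ℝ) := Int.cast_le.mpr hk
      push_cast at h'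
      exact le_abs.mpr (Or.inl (by linarith))
    · have h' : ((⌊z⌋ + 2 : ℤ) : ℝ) ≤ (k : ℝ) := Int.cast_le.mpr hk
      push_cast at h'
      exact le_abs.mpr (Or.inr (by linarith))
  exact max_eq_right (by linarith)

lemma density_summable (δ c z : ℝ) :
    Summable fun k : ℤ => 1/c * (Real.exp (-(|(k:ℝ)| * δ)) * max (1 - |z - (k : ℝ)|) 0) := by
  refine summable_of_ne_finset_zero (s := {⌊z⌋ - 1, ⌊z⌋, ⌊z⌋ + 1}) fun k hk => ?_
  rw [tri_zero hk, mul_zero, mul_zero]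

lemma density_eq (δ c : ℝ) (hδ : 0 < δ) (hc : 0 < c) (a : ℤ → ℝ)
    (haa : ∀ k : ℤ, a k = δ * Real.exp (-(|(k:ℝ)| * δ)) / c) (z : ℝ) :
    ∑' k : ℤ, ENNReal.ofReal (a k) *
        (ENNReal.ofReal δ⁻¹ * ENNReal.ofReal (max (1 - |z - (k:ℝ)|) 0))
      = ENNReal.ofReal ((1/c) * ∑' k : ℤ, Real.exp (-(|(k:ℝ)| * δ)) * max (1 - |z - (k:ℝ)|) 0) := by
  have hterm : ∀ k : ℤ, ENNReal.ofReal (a k) *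
      (ENNReal.ofReal δ⁻¹ * ENNReal.ofReal (max (1 - |z - (k:ℝ)|) 0))
      = ENNReal.ofReal (1/c * (Real.exp (-(|(k:ℝ)| * δ)) * max (1 - |z - (k:ℝ)|) 0)) := by
    intro k
    rw [← ENNReal.ofReal_mul (by positivity), ← ENNReal.ofReal_mul (by rw [haa]; positivity)]
    congr 1
    rw [haa]
    field_simp
  rw [tsum_congr hterm, ← ENNReal.ofReal_tsum_of_nonneg (fun k => by positivity)
    (density_summable δ c z), tsum_mul_left]

end Helpers

open Set ENNReal

/-- With `K` distributed as `a_k = δ e^{−|k|δ}/c_δ`, `W, U` uniform on `(−1/2,1/2)`, all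
independent, the error `δ(round(x/δ + K + W − U) + U) − x` has the piecewise linear Laplace
density `g_δ`. -/
theorem stmt17 (δ x : ℝ) (hδ : 0 < δ)
    (rnd : ℝ → ℤ) (hrnd : ∀ y : ℝ, |y - (rnd y : ℝ)| ≤ 1/2)
    (c : ℝ) (hc : c = δ * (1 + Real.exp (-δ)) / (1 - Real.exp (-δ)))
    (a : ℤ → ℝ) (haa : ∀ k : ℤ, a k = δ * Real.exp (-(|(k:ℝ)| * δ)) / c)
    (P : Measure (ℝ × ℤ × ℝ))
    (hP : P = (volume.restrict (Set.Ioo (-(1/2) : ℝ) (1/2))).prod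
        ((Measure.sum (fun k : ℤ => ENNReal.ofReal (a k) • Measure.dirac k)).prod
          (volume.restrict (Set.Ioo (-(1/2) : ℝ) (1/2))))) :
    P.map (fun ω : ℝ × ℤ × ℝ =>
        δ * ((rnd (x/δ + (ω.2.1 : ℝ) + ω.2.2 - ω.1) : ℝ) + ω.1) - x)
      = volume.withDensity (fun y =>
          ENNReal.ofReal ((1/c) * ∑' k : ℤ, Real.exp (-(|(k:ℝ)| * δ)) * max (1 - |y/δ - (k:ℝ)|) 0)) := by
  subst hP
  have hδ' : δ ≠ 0 := ne_of_gt hδ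
  have he1 : Real.exp (-δ) < 1 := by
    rw [Real.exp_lt_one_iff]
    linarith
  have hcpos : 0 < c := by
    rw [hc]
    apply div_pos (by positivity)
    linarith
  set t := x / δ with ht
  -- measurability of the rounded map
  have hm_inner : Measurable fun ω : ℝ × ℤ × ℝ => t + (ω.2.1 : ℝ) + ω.2.2 - ω.1 :=
    (((measurable_const.add
        ((measurable_of_countable _).comp (measurable_fst.comp measurable_snd))).add
      (measurable_snd.comp measurable_snd)).sub measurable_fst)
  have hmF0 : Measurable (fun ω : ℝ × ℤ × ℝ =>
      δ * ((round (t + (ω.2.1 : ℝ) + ω.2.2 - ω.1) : ℝ) + ω.1) - x) :=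
    ((measurable_const.mul
      (((measurable_of_countable _).comp (round_measurable.comp hm_inner)).add
        measurable_fst)).sub measurable_const)
  -- the bad (tie) set is null
  have hbadm : MeasurableSet {ω : ℝ × ℤ × ℝ |
      t + (ω.2.1 : ℝ) + ω.2.2 - ω.1 + 1/2 ∈ Set.range ((↑) : ℤ → ℝ)} :=
    (hm_inner.add_const _) (Set.countable_range _).measurableSet
  have hnull : ((volume.restrict (Set.Ioo (-(1/2) : ℝ) (1/2))).prod
        ((Measure.sum (fun k : ℤ => ENNReal.ofReal (a k) • Measure.dirac k)).prod
          (volume.restrict (Set.Ioo (-(1/2) : ℝ) (1/2)))))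
      {ω : ℝ × ℤ × ℝ | t + (ω.2.1 : ℝ) + ω.2.2 - ω.1 + 1/2 ∈ Set.range ((↑) : ℤ → ℝ)} = 0 := by
    rw [P_apply a _ hbadm]
    have hz : ∀ u : ℝ, (∑' k : ℤ, ENNReal.ofReal (a k) *
        (volume.restrict (Ioo (-(1/2):ℝ) (1/2)))
          {w : ℝ | (u, k, w) ∈ {ω : ℝ × ℤ × ℝ |
            t + (ω.2.1 : ℝ) + ω.2.2 - ω.1 + 1/2 ∈ Set.range ((↑) : ℤ → ℝ)}}) = 0 := by
      intro u
      rw [ENNReal.tsum_eq_zero]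
      intro k
      rw [mul_eq_zero]
      right
      have hcnt : ({w : ℝ | t + (k:ℝ) + w - u + 1/2 ∈ Set.range ((↑) : ℤ → ℝ)}).Countable := by
        refine Set.Countable.preimage (Set.countable_range _)
          (f := fun w : ℝ => t + (k:ℝ) + w - u + 1/2) ?_
        intro w1 w2 h
        dsimp at h
        linarith
      exact hcnt.measure_zero _
    simp only [hz, lintegral_zero]
  have hae : (fun ω : ℝ × ℤ × ℝ => δ * ((rnd (t + (ω.2.1:ℝ) + ω.2.2 - ω.1) : ℝ) + ω.1) - x)
      =ᵐ[(volume.restrict (Set.Ioo (-(1/2) : ℝ) (1/2))).prod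
        ((Measure.sum (fun k : ℤ => ENNReal.ofReal (a k) • Measure.dirac k)).prod
          (volume.restrict (Set.Ioo (-(1/2) : ℝ) (1/2))))]
      (fun ω : ℝ × ℤ × ℝ => δ * ((round (t + (ω.2.1:ℝ) + ω.2.2 - ω.1) : ℝ) + ω.1) - x) := by
    rw [Filter.EventuallyEq, ae_iff]
    refine measure_mono_null (fun ω hω => ?_) hnull
    simp only [mem_setOf_eq] at hω ⊢
    by_contra hb
    exact hω (by rw [rnd_eq_round rnd hrnd _ hb])
  refine Measure.ext fun s hs => ?_
  rw [Measure.map_congr hae, Measure.map_apply hmF0 hs, P_apply a _ (hmF0 hs),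
    withDensity_apply _ hs]
  have hsets : ∀ (u : ℝ) (k : ℤ),
      {w : ℝ | (u, k, w) ∈ (fun ω : ℝ × ℤ × ℝ =>
          δ * ((round (t + (ω.2.1:ℝ) + ω.2.2 - ω.1) : ℝ) + ω.1) - x) ⁻¹' s}
      = {w : ℝ | δ * ((round (t + (k:ℝ) + w - u) : ℝ) + u) - x ∈ s} := fun _ _ => rfl
  simp only [hsets]
  have hBk : ∀ k : ℤ, MeasurableSet {p : ℝ × ℝ |
      δ * ((round (t + (k:ℝ) + p.2 - p.1) : ℝ) + p.1) - x ∈ s} := by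
    intro k
    have h1 : Measurable fun p : ℝ × ℝ => t + (k:ℝ) + p.2 - p.1 :=
      (measurable_const.add measurable_snd).sub measurable_fst
    exact ((measurable_const.mul
      (((measurable_of_countable _).comp (round_measurable.comp h1)).add
        measurable_fst)).sub measurable_const) hs
  have haem : ∀ k : ℤ, AEMeasurable (fun u : ℝ => ENNReal.ofReal (a k) *
      (volume.restrict (Ioo (-(1/2):ℝ) (1/2)))
        {w : ℝ | δ * ((round (t + (k:ℝ) + w - u) : ℝ) + u) - x ∈ s})
      (volume.restrict (Ioo (-(1/2):ℝ) (1/2))) := fun k =>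
    (measurable_const.mul (measurable_measure_prodMk_left (hBk k))).aemeasurable
  rw [lintegral_tsum haem]
  have hterm : ∀ k : ℤ, (∫⁻ u in Ioo (-(1/2):ℝ) (1/2), ENNReal.ofReal (a k) *
        (volume.restrict (Ioo (-(1/2):ℝ) (1/2)))
          {w : ℝ | δ * ((round (t + (k:ℝ) + w - u) : ℝ) + u) - x ∈ s})
      = ∫⁻ y in s, ENNReal.ofReal (a k) *
          (ENNReal.ofReal δ⁻¹ * ENNReal.ofReal (max (1 - |y/δ - (k:ℝ)|) 0)) := by
    intro k
    rw [lintegral_const_mul' _ _ ENNReal.ofReal_ne_top,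
      inner_integral δ x t hδ ht k s hs,
      ← lintegral_const_mul' _ _ ENNReal.ofReal_ne_top,
      ← lintegral_const_mul' _ _ ENNReal.ofReal_ne_top]
  simp only [hterm]
  have hmy : ∀ k : ℤ, Measurable fun y : ℝ => ENNReal.ofReal (a k) *
      (ENNReal.ofReal δ⁻¹ * ENNReal.ofReal (max (1 - |y/δ - (k:ℝ)|) 0)) := by
    intro k
    apply Measurable.const_mul
    apply Measurable.const_mul
    apply ENNReal.measurable_ofReal.comp
    exact (continuous_const.sub ((continuous_id.div_const δ).sub continuous_const).abs).max
      continuous_const |>.measurable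
  rw [← lintegral_tsum (fun k => (hmy k).aemeasurable)]
  refine lintegral_congr fun y => ?_
  exact density_eq δ c hδ hcpos a haa (y/δ)
end
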